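/- Initial Aronson-type estimate (equation (3.18)): Let μ₀ be a finite Borel measure on [0,∞) and c₀ > 0 with M := ∫₀^∞ e^{c₀ y²} dμ₀(y) < ∞. Then for all s > 0 and all x ≥ 0, ∫₀^∞ N(x,s;y,0) dμ₀(y) ≤ (2M/√(2πs)) · exp(−c₀ x²/(1 + 2c₀ s)). -/
import Mathlib


open MeasureTheory Set Filter Topology

/-- The Gaussian kernel `p_ε(x) = (2πε)^{-1/2} exp(-x²/(2ε))`. -/
noncomputable def pker (ε x : ℝ) : ℝ :=
  (Real.sqrt (2 * Real.pi * ε))⁻¹ * Real.exp (-(x ^ 2) / (2 * ε))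

/-- The reflected (Neumann) heat kernel `N(x,t;y,s) = p_{t-s}(x-y) + p_{t-s}(x+y)`. -/
noncomputable def Nker (x t y s : ℝ) : ℝ :=
  pker (t - s) (x - y) + pker (t - s) (x + y)

/-- Initial Aronson-type estimate (equation (3.18)): if `μ₀` is a finite Borel
measure on `[0,∞)` with `M := ∫₀^∞ e^{c₀y²} dμ₀(y) < ∞`, then for all `s > 0` and
`x ≥ 0`, `∫₀^∞ N(x,s;y,0) dμ₀(y) ≤ (2M/√(2πs)) exp(-c₀x²/(1+2c₀s))`. -/
theorem initial_aronson_estimate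
    (μ₀ : Measure ℝ) [IsFiniteMeasure μ₀] (hsupp : μ₀ (Iio 0) = 0)
    (c₀ : ℝ) (hc₀ : 0 < c₀)
    (hM : Integrable (fun y => Real.exp (c₀ * y ^ 2)) μ₀)
    (s x : ℝ) (hs : 0 < s) (hx : 0 ≤ x) :
    (∫ y, Nker x s y 0 ∂μ₀)
      ≤ 2 * (∫ y, Real.exp (c₀ * y ^ 2) ∂μ₀) / Real.sqrt (2 * Real.pi * s)
        * Real.exp (-c₀ * x ^ 2 / (1 + 2 * c₀ * s)) := by
  have hpi := Real.pi_pos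
  have hD : (0:ℝ) < 1 + 2 * c₀ * s := by positivity
  have hsq : 0 < Real.sqrt (2 * Real.pi * s) := Real.sqrt_pos.2 (by positivity)
  set C : ℝ := 2 / Real.sqrt (2 * Real.pi * s) *
      Real.exp (-c₀ * x ^ 2 / (1 + 2 * c₀ * s)) with hC
  have hC0 : 0 ≤ C := by positivity
  have hgi : Integrable (fun y => C * Real.exp (c₀ * y ^ 2)) μ₀ := hM.const_mul C
  have hae : ∀ᵐ y ∂μ₀, 0 ≤ y := by
    rw [ae_iff]
    simpa [not_le, Set.Iio] using hsupp
  have hbound : ∀ y : ℝ, 0 ≤ y → Nker x s y 0 ≤ C * Real.exp (c₀ * y ^ 2) := by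
    intro y hy
    have h2s : (0:ℝ) < 2 * s := by linarith
    have e1 : -((x + y) ^ 2) / (2 * s) ≤ -((x - y) ^ 2) / (2 * s) := by
      rw [div_le_div_iff₀ h2s h2s]
      nlinarith [mul_nonneg hx hy]
    have h1 : pker s (x + y) ≤ pker s (x - y) :=
      mul_le_mul_of_nonneg_left (Real.exp_le_exp.2 e1) (by positivity)
    have hA : (-c₀ * x ^ 2 / (1 + 2 * c₀ * s)) * (1 + 2 * c₀ * s) = -c₀ * x ^ 2 :=
      div_mul_cancel₀ _ hD.ne'
    have e2 : -((x - y) ^ 2) / (2 * s)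
        ≤ -c₀ * x ^ 2 / (1 + 2 * c₀ * s) + c₀ * y ^ 2 := by
      rw [div_le_iff₀ h2s]
      nlinarith [sq_nonneg (x - (1 + 2 * c₀ * s) * y), hA, hs, hc₀]
    have h2 : pker s (x - y) ≤ (Real.sqrt (2 * Real.pi * s))⁻¹ *
        (Real.exp (-c₀ * x ^ 2 / (1 + 2 * c₀ * s)) * Real.exp (c₀ * y ^ 2)) := by
      unfold pker
      rw [← Real.exp_add]
      exact mul_le_mul_of_nonneg_left (Real.exp_le_exp.2 e2) (by positivity)
    have hNe : Nker x s y 0 = pker s (x - y) + pker s (x + y) := by simp [Nker]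
    rw [hNe]
    calc pker s (x - y) + pker s (x + y) ≤ 2 * pker s (x - y) := by linarith
    _ ≤ 2 * ((Real.sqrt (2 * Real.pi * s))⁻¹ *
        (Real.exp (-c₀ * x ^ 2 / (1 + 2 * c₀ * s)) * Real.exp (c₀ * y ^ 2))) := by
        linarith
    _ = C * Real.exp (c₀ * y ^ 2) := by rw [hC]; ring
  have hmono : (∫ y, Nker x s y 0 ∂μ₀) ≤ ∫ y, C * Real.exp (c₀ * y ^ 2) ∂μ₀ := by
    apply integral_mono_of_nonneg
    · filter_upwards with y
      unfold Nker pker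
      positivity
    · exact hgi
    · filter_upwards [hae] with y hy using hbound y hy
  calc (∫ y, Nker x s y 0 ∂μ₀) ≤ ∫ y, C * Real.exp (c₀ * y ^ 2) ∂μ₀ := hmono
  _ = C * ∫ y, Real.exp (c₀ * y ^ 2) ∂μ₀ := integral_const_mul _ _
  _ = 2 * (∫ y, Real.exp (c₀ * y ^ 2) ∂μ₀) / Real.sqrt (2 * Real.pi * s)
        * Real.exp (-c₀ * x ^ 2 / (1 + 2 * c₀ * s)) := by rw [hC]; ring
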